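/- arXiv:1105.5131 — 4 statements merged into one kernel-verified Lean document; each statement's English description precedes it below -/
import Mathlib

section
/- Let G be a graph and k>1 an integer. Let H be the graph obtained from G by replacing each vertex with k copies and each edge by the complete bipartite graph between the corresponding copies of its endpoints. Then the hard-core partition functions satisfy Z_G((1+λ)^k - 1) = Z_H(λ) for every activity λ > 0. -/
open Finset

private lemma sum_powerset_pow (k : ℕ) (lam : ℝ) :
    ∑ A ∈ (univ : Finset (Fin k)).powerset, lam ^ A.card = (1 + lam) ^ k := by
  simpa [add_comm] using Finset.sum_pow_mul_eq_add_pow lam 1 (univ : Finset (Fin k))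

private lemma sum_powerset_erase_pow (k : ℕ) (lam : ℝ) :
    ∑ A ∈ ((univ : Finset (Fin k)).powerset.erase ∅), lam ^ A.card
      = (1 + lam) ^ k - 1 := by
  have h := Finset.add_sum_erase ((univ : Finset (Fin k)).powerset)
    (fun A => lam ^ A.card) (by simp : (∅ : Finset (Fin k)) ∈ (univ : Finset (Fin k)).powerset)
  rw [sum_powerset_pow] at h
  simp only [card_empty, pow_zero] at h
  linarith

/-- Blow-up identity: replacing each vertex of `G` by `k` copies and each edge by a
complete bipartite graph turns activity `(1+λ)^k - 1` into activity `λ`. -/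
theorem blowup_partition_function {V : Type*} [Fintype V] [DecidableEq V]
    (G : SimpleGraph V) [DecidableRel G.Adj] (k : ℕ) (hk : 1 < k)
    (lam : ℝ) (hlam : 0 < lam) :
    (∑ s ∈ univ.powerset.filter
        (fun s : Finset V => ∀ u ∈ s, ∀ v ∈ s, ¬ G.Adj u v),
        ((1 + lam) ^ k - 1) ^ s.card) =
    (∑ t ∈ univ.powerset.filter
        (fun t : Finset (V × Fin k) => ∀ p ∈ t, ∀ q ∈ t, ¬ G.Adj p.1 q.1),
        lam ^ t.card) := by
  classical
  -- the common middle object: sums over functions `V → Finset (Fin k)` with independent support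
  set P : (V → Finset (Fin k)) → Prop :=
    fun f => ∀ u v : V, (f u).Nonempty → (f v).Nonempty → ¬ G.Adj u v with hP
  have hmid : (∑ t ∈ univ.powerset.filter
        (fun t : Finset (V × Fin k) => ∀ p ∈ t, ∀ q ∈ t, ¬ G.Adj p.1 q.1),
        lam ^ t.card)
      = ∑ f ∈ (univ : Finset (V → Finset (Fin k))).filter P,
          lam ^ (∑ v, (f v).card) := by
    refine Finset.sum_nbij'
      (i := fun t => fun v => (t.filter (fun p => p.1 = v)).image Prod.snd)
      (j := fun f => univ.filter (fun p : V × Fin k => p.2 ∈ f p.1))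
      ?_ ?_ ?_ ?_ ?_
    · intro t ht
      simp only [mem_filter, mem_powerset] at ht
      simp only [mem_filter, mem_univ, true_and, hP]
      intro u v hu hv
      obtain ⟨a, ha⟩ := hu
      obtain ⟨b, hb⟩ := hv
      simp only [mem_image, mem_filter] at ha hb
      obtain ⟨p, ⟨hpt, hp1⟩, _⟩ := ha
      obtain ⟨q, ⟨hqt, hq1⟩, _⟩ := hb
      rw [← hp1, ← hq1]
      exact ht.2 p hpt q hqt
    · intro f hf
      simp only [mem_filter, mem_univ, true_and, hP] at hf
      simp only [mem_filter, mem_powerset]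
      refine ⟨filter_subset _ _ |>.trans (subset_refl _), ?_⟩
      intro p hp q hq
      simp only [mem_filter, mem_univ, true_and] at hp hq
      exact hf p.1 q.1 ⟨p.2, hp⟩ ⟨q.2, hq⟩
    · intro t ht
      ext f
      simp only [mem_filter, mem_univ, true_and, mem_image]
      constructor
      · rintro ⟨p, ⟨hpt, h1⟩, h2⟩
        have : p = f := Prod.ext h1 h2
        exact this ▸ hpt
      · intro hf
        exact ⟨f, by simp [hf], rfl⟩
    · intro f hf
      funext v
      ext a
      simp only [mem_image, mem_filter, mem_univ, true_and]
      constructor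
      · rintro ⟨p, ⟨hp, rfl⟩, rfl⟩
        exact hp
      · intro ha
        exact ⟨(v, a), ⟨ha, rfl⟩, rfl⟩
    · intro t ht
      congr 1
      have h1 : t.card = ∑ v, (t.filter (fun p => p.1 = v)).card :=
        Finset.card_eq_sum_card_fiberwise (fun p _ => mem_univ p.1)
      rw [h1]
      refine Finset.sum_congr rfl fun v _ => ?_
      rw [Finset.card_image_of_injOn]
      intro p hp q hq hpq
      simp only [coe_filter, Set.mem_setOf_eq] at hp hq
      exact Prod.ext (hp.2.trans hq.2.symm) hpq
  rw [hmid]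
  -- now rewrite the left side as the same sum over functions
  rw [← Finset.sum_fiberwise_of_maps_to
      (g := fun f : V → Finset (Fin k) => univ.filter fun v => (f v).Nonempty)
      (t := univ.powerset.filter (fun s : Finset V => ∀ u ∈ s, ∀ v ∈ s, ¬ G.Adj u v))
      (by
        intro f hf
        simp only [mem_filter, mem_univ, true_and, hP] at hf
        simp only [mem_filter, mem_powerset]
        refine ⟨filter_subset _ _ |>.trans (subset_refl _), ?_⟩
        intro u hu v hv
        simp only [mem_filter, mem_univ, true_and] at hu hv
        exact hf u v hu hv)]
  refine Finset.sum_congr rfl fun s hs => ?_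
  simp only [mem_filter, mem_powerset] at hs
  -- the fiber over an independent set `s` is a `piFinset`
  have hfiber : ((univ : Finset (V → Finset (Fin k))).filter P).filter
        (fun f => (univ.filter fun v => (f v).Nonempty) = s)
      = Fintype.piFinset (fun v : V =>
          if v ∈ s then ((univ : Finset (Fin k)).powerset.erase ∅) else {∅}) := by
    ext f
    simp only [mem_filter, mem_univ, true_and, Fintype.mem_piFinset, hP]
    constructor
    · rintro ⟨-, hsupp⟩
      intro v
      by_cases hv : v ∈ s
      · simp only [if_pos hv, mem_erase, mem_powerset]
        refine ⟨?_, subset_univ _⟩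
        have : v ∈ univ.filter fun v => (f v).Nonempty := hsupp ▸ hv
        simp only [mem_filter, mem_univ, true_and] at this
        exact Finset.nonempty_iff_ne_empty.mp this
      · simp only [if_neg hv, mem_singleton]
        by_contra hne
        have : v ∈ univ.filter fun v => (f v).Nonempty := by
          simp [Finset.nonempty_iff_ne_empty.mpr hne]
        exact hv (hsupp ▸ this)
    · intro hf
      have hsupp : (univ.filter fun v => (f v).Nonempty) = s := by
        ext v
        simp only [mem_filter, mem_univ, true_and]
        constructor
        · intro hv
          by_contra hvs
          have := hf v
          rw [if_neg hvs, mem_singleton] at this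
          rw [this] at hv
          exact Finset.not_nonempty_empty hv
        · intro hv
          have := hf v
          rw [if_pos hv, mem_erase] at this
          exact Finset.nonempty_iff_ne_empty.mpr this.1
      refine ⟨?_, hsupp⟩
      intro u v hu hv
      have hus : u ∈ s := by
        rw [← hsupp]; simp [hu]
      have hvs : v ∈ s := by
        rw [← hsupp]; simp [hv]
      exact hs.2 u hus v hvs
  rw [hfiber]
  have hterm : ∀ f ∈ Fintype.piFinset (fun v : V =>
      if v ∈ s then ((univ : Finset (Fin k)).powerset.erase ∅) else ({∅} : Finset (Finset (Fin k)))),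
      lam ^ (∑ v, (f v).card) = ∏ v, lam ^ (f v).card := by
    intro f _
    exact (Finset.prod_pow_eq_pow_sum univ (fun v => (f v).card) lam).symm
  rw [Finset.sum_congr rfl hterm,
    ← Finset.prod_univ_sum (fun v : V => if v ∈ s then ((univ : Finset (Fin k)).powerset.erase ∅)
      else ({∅} : Finset (Finset (Fin k)))) (fun _ A => lam ^ A.card)]
  have hcol : ∀ v : V, (∑ A ∈ (if v ∈ s then ((univ : Finset (Fin k)).powerset.erase ∅)
        else ({∅} : Finset (Finset (Fin k)))), lam ^ A.card)
      = if v ∈ s then (1 + lam) ^ k - 1 else 1 := by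
    intro v
    by_cases hv : v ∈ s
    · simp only [if_pos hv]
      exact sum_powerset_erase_pow k lam
    · simp [if_neg hv]
  rw [Finset.prod_congr rfl (fun v _ => hcol v)]
  rw [Finset.prod_ite_mem, univ_inter, Finset.prod_const]
end

section
/- Let α, β ∈ (0,1) with α+β < 1, let γ, δ satisfy α² < γ < α and β² < δ < β, and set D = (1−α−β)² + 4(α−γ)(β−δ), ε̂ = (1/2)(1+α−β−2γ−√D). Then αβ(1−β−γ−ε̂) − (1−α)(1−β)(α−γ−ε̂) = (1/2)(1−α−β)(1−α−β+2αβ−√D) > 0. -/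
theorem pro_bigdelta2 (α β γ δ : ℝ)
    (hα : α ∈ Set.Ioo (0:ℝ) 1) (hβ : β ∈ Set.Ioo (0:ℝ) 1) (hab : α + β < 1)
    (hγ1 : α^2 < γ) (hγ2 : γ < α) (hδ1 : β^2 < δ) (hδ2 : δ < β) :
    let D := (1 - α - β)^2 + 4*(α - γ)*(β - δ)
    let ε := (1/2) * (1 + α - β - 2*γ - Real.sqrt D)
    α*β*(1 - β - γ - ε) - (1 - α)*(1 - β)*(α - γ - ε)
      = (1/2)*(1 - α - β)*(1 - α - β + 2*α*β - Real.sqrt D) ∧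
    0 < (1/2)*(1 - α - β)*(1 - α - β + 2*α*β - Real.sqrt D) := by
  obtain ⟨ha0, ha1⟩ := hα
  obtain ⟨hb0, hb1⟩ := hβ
  intro D ε
  constructor
  · show α*β*(1 - β - γ - (1/2) * (1 + α - β - 2*γ - Real.sqrt D)) -
      (1 - α)*(1 - β)*(α - γ - (1/2) * (1 + α - β - 2*γ - Real.sqrt D))
      = (1/2)*(1 - α - β)*(1 - α - β + 2*α*β - Real.sqrt D)
    ring
  · have h1 : 0 < 1 - α - β + 2*α*β := by nlinarith
    have h2 : D < (1 - α - β + 2*α*β)^2 := by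
      have : (α - γ)*(β - δ) < (α*(1-α))*(β*(1-β)) := by nlinarith
      show (1 - α - β)^2 + 4*(α - γ)*(β - δ) < _
      nlinarith
    have h3 : Real.sqrt D < 1 - α - β + 2*α*β := by
      rw [show (1 - α - β + 2*α*β)^2 = (1 - α - β + 2*α*β)^2 from rfl] at h2
      exact (Real.sqrt_lt' h1).2 h2
    nlinarith
end

section
/- Let α, β ∈ (0,1) with α + β < 1 and α ≤ 1/2, β ≤ 1/2, and let γ, δ satisfy α² < γ < α, β² < δ < β, 1−2β+δ−γ > 0, 1−2α+γ−δ > 0, (1−α)²δ + β²(2α−1−γ) > 0, and (1−β)²γ + α²(2β−1−δ) > 0. Then D − (−(1−α−β)² − α − β + γ + δ)² > 0, where D = (1−α−β)² + 4(α−γ)(β−δ). -/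
set_option maxHeartbeats 1000000

lemma case1 (α β a b : ℝ) (ha0 : 0 < α) (hb0 : 0 < β) (hab : α + β < 1)
    (hα2 : α ≤ 1/2) (hβ2 : β ≤ 1/2) (hb : 0 < b)
    (hg4 : 0 < α*(1-α-β)*(1-β) - a*(1-β)^2 + b*α^2)
    (hd : (α-β)*(1-α-β) ≤ a - b) :
    0 < (1-α-β)^2*(1-(1-α-β)^2) - (a-b)^2 - 2*(1-α-β)^2*(a+b) := by
  have hs : 0 < 1 - α - β := by linarith
  have hc : 0 < 1 + α - β := by linarith
  have hB : 0 < 1 - β := by linarith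
  set x := a - b - (α-β)*(1-α-β) with hxdef
  have hx0 : 0 ≤ x := by simp only [hxdef]; linarith
  -- from b>0, g4>0 : x*(1-β)^2 < s*c*β*(1-β)
  have h5 : x*(1-β)^2 < (1-α-β)*(1+α-β)*(β*(1-β)) := by
    nlinarith [hg4, mul_pos (mul_pos hs hc) hb]
  have hR : β*(1+α-β)^2 ≤ 2*(1-β)*(1-α-β+2*α*β) := by
    nlinarith [mul_pos ha0 hb0, sq_nonneg (α-β), sq_nonneg (1-2*α), sq_nonneg (1-2*β),
      mul_pos hs hb0]
  have h6 : (1+α-β)*x < 2*(1-α-β)*(1-α-β+2*α*β) := by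
    nlinarith [mul_le_mul_of_nonneg_left hR (mul_pos hs hB).le,
      mul_lt_mul_of_pos_left h5 hc, mul_pos hB hB]
  have hFc : 0 < ((1-α-β)^2*(1-(1-α-β)^2) - (a-b)^2 - 2*(1-α-β)^2*(a+b)) * (1+α-β) := by
    have hid : ((1-α-β)^2*(1-(1-α-β)^2) - (a-b)^2 - 2*(1-α-β)^2*(a+b)) * (1+α-β)
        = 4*(1-α-β)*(α*(1-α-β)*(1-β) - a*(1-β)^2 + b*α^2)
          + x*(2*(1-α-β)*(1-α-β+2*α*β) - (1+α-β)*x) := by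
      simp only [hxdef]; ring
    rw [hid]
    have t1 := mul_pos hs hg4
    have t2 := mul_nonneg hx0 (by linarith : (0:ℝ) ≤ 2*(1-α-β)*(1-α-β+2*α*β) - (1+α-β)*x)
    linarith [t1, t2]
  nlinarith [hFc, hc]

lemma key_red (α β a b : ℝ) (ha0 : 0 < α) (hb0 : 0 < β) (hab : α + β < 1)
    (hα2 : α ≤ 1/2) (hβ2 : β ≤ 1/2) (ha : 0 < a) (hb : 0 < b)
    (hg3 : 0 < β*(1-α-β)*(1-α) - b*(1-α)^2 + a*β^2)
    (hg4 : 0 < α*(1-α-β)*(1-β) - a*(1-β)^2 + b*α^2) :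
    0 < (1-α-β)^2*(1-(1-α-β)^2) - (a-b)^2 - 2*(1-α-β)^2*(a+b) := by
  rcases le_total ((α-β)*(1-α-β)) (a - b) with h | h
  · exact case1 α β a b ha0 hb0 hab hα2 hβ2 hb hg4 h
  · have hswap := case1 β α b a hb0 ha0 (by linarith) hβ2 hα2 ha
      (by nlinarith [hg3] : 0 < β*(1-β-α)*(1-α) - b*(1-α)^2 + a*β^2)
      (by nlinarith [h] : (β-α)*(1-β-α) ≤ b - a)
    nlinarith [hswap]

theorem clm_qwer (α β γ δ : ℝ)
    (hα : α ∈ Set.Ioo (0:ℝ) 1) (hβ : β ∈ Set.Ioo (0:ℝ) 1) (hab : α + β < 1)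
    (hα2 : α ≤ 1/2) (hβ2 : β ≤ 1/2)
    (hγ1 : α^2 < γ) (hγ2 : γ < α) (hδ1 : β^2 < δ) (hδ2 : δ < β)
    (h1 : 0 < 1 - 2*β + δ - γ) (h2 : 0 < 1 - 2*α + γ - δ)
    (h3 : 0 < (1 - α)^2*δ + β^2*(2*α - 1 - γ))
    (h4 : 0 < (1 - β)^2*γ + α^2*(2*β - 1 - δ)) :
    0 < ((1 - α - β)^2 + 4*(α - γ)*(β - δ))
        - (-(1 - α - β)^2 - α - β + γ + δ)^2 := by
  obtain ⟨ha0, ha1⟩ := hα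
  obtain ⟨hb0, hb1⟩ := hβ
  have key := key_red α β (α - γ) (β - δ) ha0 hb0 hab hα2 hβ2
    (by linarith) (by linarith)
    (by nlinarith [h3]) (by nlinarith [h4])
  nlinarith [key]
end

section
/- Let Δ ≥ 3, λ > 0, and suppose q⁺, q⁻ ∈ (0,1) satisfy λ(1−q⁺)^(Δ−1) = q⁻/(1−q⁻) and λ(1−q⁻)^(Δ−1) = q⁺/(1−q⁺). Then γ := λ²(1−q⁺)^(Δ−2)·(1+λ(1−q⁺)^(Δ−1))^(Δ−2) / [λ + (1+λ(1−q⁺)^(Δ−1))^(Δ−1)]² equals q⁺·q⁻. -/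
/-!
Put `a = 1 - q⁺`, `b = 1 - q⁻`. The fixed-point equations say `1 + λ a^(Δ-1) = b⁻¹` and
`λ + b^(-(Δ-1)) = (a b^(Δ-1))⁻¹`, so `γ = λ² a^Δ b^Δ = (λ a^(Δ-1) b) (λ b^(Δ-1) a)`, and the two
factors are `q⁻` and `q⁺` by the same equations.
-/

section HardCoreFixedPoint

variable {K : Type*} [Field K] {n : ℕ} {lam a b : K}

lemma one_add_eq_inv_of_eq_div {x b : K} (hb : b ≠ 0) (h : x = (1 - b) / b) : 1 + x = b⁻¹ := by
  rw [h]
  field_simp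
  ring

lemma add_inv_pow_eq_inv (ha : a ≠ 0) (hb : b ≠ 0) (h : lam * b ^ (n + 1) = (1 - a) / a) :
    lam + b⁻¹ ^ (n + 1) = (a * b ^ (n + 1))⁻¹ := by
  calc lam + b⁻¹ ^ (n + 1) = (1 + lam * b ^ (n + 1)) / b ^ (n + 1) := by
        rw [inv_pow]; field_simp; ring
    _ = (a * b ^ (n + 1))⁻¹ := by rw [one_add_eq_inv_of_eq_div ha h]; field_simp

lemma two_level_derivative_eq_of_fixed_point (ha : a ≠ 0) (hb : b ≠ 0)
    (h1 : lam * a ^ (n + 1) = (1 - b) / b) (h2 : lam * b ^ (n + 1) = (1 - a) / a) :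
    lam ^ 2 * a ^ n * (1 + lam * a ^ (n + 1)) ^ n / (lam + (1 + lam * a ^ (n + 1)) ^ (n + 1)) ^ 2
      = (1 - a) * (1 - b) := by
  rw [one_add_eq_inv_of_eq_div hb h1, add_inv_pow_eq_inv ha hb h2, inv_pow]
  calc _ = (lam * b ^ (n + 1) * a) * (lam * a ^ (n + 1) * b) := by field_simp; ring
    _ = (1 - a) * (1 - b) := by rw [h1, h2]; field_simp

end HardCoreFixedPoint

theorem gamma_eq_qq_general (Δ : ℕ) (hΔ : 3 ≤ Δ) (lam : ℝ)
    (qPlus qMinus : ℝ) (hqPlus : qPlus ∈ Set.Ioo (0:ℝ) 1) (hqMinus : qMinus ∈ Set.Ioo (0:ℝ) 1)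
    (h1 : lam * (1 - qPlus)^(Δ - 1) = qMinus / (1 - qMinus))
    (h2 : lam * (1 - qMinus)^(Δ - 1) = qPlus / (1 - qPlus)) :
    lam^2 * (1 - qPlus)^(Δ - 2) * (1 + lam * (1 - qPlus)^(Δ - 1))^(Δ - 2)
      / (lam + (1 + lam * (1 - qPlus)^(Δ - 1))^(Δ - 1))^2 = qPlus * qMinus := by
  obtain ⟨n, rfl⟩ : ∃ n, Δ = n + 2 := ⟨Δ - 2, by omega⟩
  have ha : 1 - qPlus ≠ 0 := sub_ne_zero.mpr hqPlus.2.ne'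
  have hb : 1 - qMinus ≠ 0 := sub_ne_zero.mpr hqMinus.2.ne'
  simp only [Nat.add_sub_cancel, Nat.add_succ_sub_one] at h1 h2 ⊢
  have := two_level_derivative_eq_of_fixed_point ha hb (by rwa [sub_sub_cancel]) (by rwa [sub_sub_cancel])
  rwa [sub_sub_cancel, sub_sub_cancel] at this

theorem gamma_eq_qq (Δ : ℕ) (hΔ : 3 ≤ Δ) (lam : ℝ) (hlam : 0 < lam)
    (qPlus qMinus : ℝ) (hqPlus : qPlus ∈ Set.Ioo (0:ℝ) 1) (hqMinus : qMinus ∈ Set.Ioo (0:ℝ) 1)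
    (h1 : lam * (1 - qPlus)^(Δ - 1) = qMinus / (1 - qMinus))
    (h2 : lam * (1 - qMinus)^(Δ - 1) = qPlus / (1 - qPlus)) :
    lam^2 * (1 - qPlus)^(Δ - 2) * (1 + lam * (1 - qPlus)^(Δ - 1))^(Δ - 2)
      / (lam + (1 + lam * (1 - qPlus)^(Δ - 1))^(Δ - 1))^2 = qPlus * qMinus :=
  gamma_eq_qq_general Δ hΔ lam qPlus qMinus hqPlus hqMinus h1 h2
end
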